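/- arXiv:2209.02284 — 2 statements merged into one kernel-verified Lean document; each statement's English description precedes it below -/
import Mathlib

section
/- Let A : ℝ^n → ℝ^{N×n_u} and b : ℝ^n → ℝ^N be functions on a set D ⊆ ℝ^n satisfying ‖A(x) − A(x′)‖_∞ ≤ L_A ‖x − x′‖_∞ and ‖b(x) − b(x′)‖_∞ ≤ L_b ‖x − x′‖_∞ for all x, x′ ∈ D, where ‖·‖_∞ on matrices denotes the operator norm induced by the ℓ∞ vector norm. Suppose for some x ∈ D there exist u* ∈ ℝ^{n_u} and c > 0 with A(x)u* + b(x) ≥ c·1 (componentwise). Then for every x′ ∈ D with ‖x − x′‖_∞ ≤ c / (L_A ‖u*‖_∞ + L_b), it holds that A(x′)u* + b(x′) ≥ 0 componentwise. -/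
/-!
Moving from `x` to `x'` changes the `i`-th constraint value by the `i`-th entry of
`(A x - A x') u + (b x - b x')`, whose size is at most `(L_A ‖u‖ + L_b) ‖x - x'‖` in the
`ℓ∞` norms; the closeness hypothesis makes this at most the slack `c`.
-/

/-- `ℓ∞` norm of a vector. -/
noncomputable def vecNormInf {N : ℕ} (v : Fin N → ℝ) : ℝ := ⨆ i, |v i|

/-- `ℓ∞ → ℓ∞` induced operator norm of a matrix (max absolute row sum). -/
noncomputable def matNormInf {N m : ℕ} (A : Matrix (Fin N) (Fin m) ℝ) : ℝ := ⨆ i, ∑ j, |A i j|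

open Matrix
open scoped Matrix.Norms.Operator

theorem iSup_norm_apply_eq_pi_norm {ι E : Type*} [Fintype ι] [SeminormedAddCommGroup E]
    (f : ι → E) : ⨆ i, ‖f i‖ = ‖f‖ :=
  le_antisymm (Real.iSup_le (norm_le_pi_norm f) (norm_nonneg f))
    ((pi_norm_le_iff_of_nonneg (Real.iSup_nonneg fun _ => norm_nonneg _)).2 fun i =>
      le_ciSup (f := fun i => ‖f i‖) (Set.finite_range _).bddAbove i)

theorem vecNormInf_eq_norm {N : ℕ} (v : Fin N → ℝ) : vecNormInf v = ‖v‖ :=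
  iSup_norm_apply_eq_pi_norm v

theorem matNormInf_eq_norm {N m : ℕ} (A : Matrix (Fin N) (Fin m) ℝ) : matNormInf A = ‖A‖ := by
  change _ = ‖fun i => WithLp.toLp 1 (A i)‖
  rw [← iSup_norm_apply_eq_pi_norm]
  simp [matNormInf, PiLp.norm_eq_of_L1]

theorem mulVec_add_apply_sub_norm_le {ι κ : Type*} [Fintype ι] [Fintype κ]
    (M M' : Matrix ι κ ℝ) (v v' : ι → ℝ) (u : κ → ℝ) (i : ι) :
    (M *ᵥ u) i + v i - (‖M - M'‖ * ‖u‖ + ‖v - v'‖) ≤ (M' *ᵥ u) i + v' i := by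
  have hdiff : (M *ᵥ u) i + v i - ((M' *ᵥ u) i + v' i) = ((M - M') *ᵥ u + (v - v')) i := by
    simp only [sub_mulVec, Pi.add_apply, Pi.sub_apply]
    ring
  have hbound : ((M - M') *ᵥ u + (v - v')) i ≤ ‖M - M'‖ * ‖u‖ + ‖v - v'‖ :=
    calc _ ≤ ‖(M - M') *ᵥ u + (v - v')‖ := (Real.le_norm_self _).trans (norm_le_pi_norm _ i)
      _ ≤ ‖(M - M') *ᵥ u‖ + ‖v - v'‖ := norm_add_le _ _
      _ ≤ ‖M - M'‖ * ‖u‖ + ‖v - v'‖ := by gcongr; exact linfty_opNorm_mulVec _ _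
  linarith

theorem probe_and_expand_general {n nu N : ℕ}
    (D : Set (Fin n → ℝ))
    (A : (Fin n → ℝ) → Matrix (Fin N) (Fin nu) ℝ)
    (b : (Fin n → ℝ) → (Fin N → ℝ))
    (LA Lb : ℝ)
    (hA : ∀ x ∈ D, ∀ x' ∈ D, matNormInf (A x - A x') ≤ LA * vecNormInf (x - x'))
    (hb : ∀ x ∈ D, ∀ x' ∈ D, vecNormInf (b x - b x') ≤ Lb * vecNormInf (x - x'))
    (x : Fin n → ℝ) (hx : x ∈ D)
    (u : Fin nu → ℝ) (c : ℝ)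
    (hpos : 0 < LA * vecNormInf u + Lb)
    (hfeas : ∀ i, c ≤ (A x).mulVec u i + b x i)
    (x' : Fin n → ℝ) (hx' : x' ∈ D)
    (hclose : vecNormInf (x - x') ≤ c / (LA * vecNormInf u + Lb)) :
    ∀ i, 0 ≤ (A x').mulVec u i + b x' i := by
  intro i
  have hAx := hA x hx x' hx'
  have hbx := hb x hx x' hx'
  simp only [vecNormInf_eq_norm, matNormInf_eq_norm] at hAx hbx hpos hclose
  have hslack : (LA * ‖u‖ + Lb) * ‖x - x'‖ ≤ c := (le_div_iff₀' hpos).1 hclose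
  have hAu : ‖A x - A x'‖ * ‖u‖ ≤ LA * ‖x - x'‖ * ‖u‖ := by gcongr
  calc 0 ≤ (A x *ᵥ u) i + b x i - (‖A x - A x'‖ * ‖u‖ + ‖b x - b x'‖) := by
        linarith [hfeas i]
    _ ≤ (A x' *ᵥ u) i + b x' i := mulVec_add_apply_sub_norm_le _ _ _ _ u i

/-- Proposition 3: if the CBF conditions have slack `c > 0` at `x` with
input `u`, they remain feasible (with the same input) at any `x'` with
`‖x − x'‖_∞ ≤ c / (L_A ‖u‖_∞ + L_b)`. -/
theorem probe_and_expand {n nu N : ℕ}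
    (D : Set (Fin n → ℝ))
    (A : (Fin n → ℝ) → Matrix (Fin N) (Fin nu) ℝ)
    (b : (Fin n → ℝ) → (Fin N → ℝ))
    (LA Lb : ℝ)
    (hA : ∀ x ∈ D, ∀ x' ∈ D, matNormInf (A x - A x') ≤ LA * vecNormInf (x - x'))
    (hb : ∀ x ∈ D, ∀ x' ∈ D, vecNormInf (b x - b x') ≤ Lb * vecNormInf (x - x'))
    (x : Fin n → ℝ) (hx : x ∈ D)
    (u : Fin nu → ℝ) (c : ℝ) (hc : 0 < c)
    (hpos : 0 < LA * vecNormInf u + Lb)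
    (hfeas : ∀ i, c ≤ (A x).mulVec u i + b x i)
    (x' : Fin n → ℝ) (hx' : x' ∈ D)
    (hclose : vecNormInf (x - x') ≤ c / (LA * vecNormInf u + Lb)) :
    ∀ i, 0 ≤ (A x').mulVec u i + b x' i :=
  probe_and_expand_general D A b LA Lb hA hb x hx u c hpos hfeas x' hx' hclose
end

section
/- Let A, b, D, L_A, L_b be as above, and let U ⊆ ℝ^{n_u} be a set with ‖u‖_∞ ≤ M for all u ∈ U. Suppose that for every x ∈ D there exists u ∈ U with A(x)u + b(x) ≥ η·1 for some fixed η > 0. Define ρ̲ = 2η / (L_A · M + L_b). Then for every x ∈ D and every x′ ∈ D with ‖x − x′‖_∞ ≤ ρ̲/2, there exists u ∈ U with A(x′)u + b(x′) ≥ 0 componentwise. -/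
section NormInf

variable {N m : ℕ}

lemma abs_le_vecNormInf (v : Fin N → ℝ) (i : Fin N) : |v i| ≤ vecNormInf v :=
  le_ciSup (Set.finite_range fun k => |v k|).bddAbove i

lemma vecNormInf_nonneg (v : Fin N → ℝ) : 0 ≤ vecNormInf v :=
  Real.iSup_nonneg fun _ => abs_nonneg _

lemma rowSum_le_matNormInf (B : Matrix (Fin N) (Fin m) ℝ) (i : Fin N) :
    ∑ j, |B i j| ≤ matNormInf B :=
  le_ciSup (Set.finite_range fun k => ∑ j, |B k j|).bddAbove i

lemma matNormInf_nonneg (B : Matrix (Fin N) (Fin m) ℝ) : 0 ≤ matNormInf B :=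
  Real.iSup_nonneg fun _ => Finset.sum_nonneg fun _ _ => abs_nonneg _

lemma abs_mulVec_le (B : Matrix (Fin N) (Fin m) ℝ) (u : Fin m → ℝ) (i : Fin N) :
    |B.mulVec u i| ≤ matNormInf B * vecNormInf u :=
  calc |B.mulVec u i| = |∑ j, B i j * u j| := rfl
    _ ≤ ∑ j, |B i j| * |u j| := by
        simpa only [abs_mul] using Finset.abs_sum_le_sum_abs (fun j => B i j * u j) Finset.univ
    _ ≤ ∑ j, |B i j| * vecNormInf u :=
        Finset.sum_le_sum fun j _ => mul_le_mul_of_nonneg_left (abs_le_vecNormInf u j) (abs_nonneg _)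
    _ = (∑ j, |B i j|) * vecNormInf u := (Finset.sum_mul _ _ _).symm
    _ ≤ matNormInf B * vecNormInf u :=
        mul_le_mul_of_nonneg_right (rowSum_le_matNormInf B i) (vecNormInf_nonneg u)

lemma mulVec_add_nonneg_of_margin {A A' : Matrix (Fin N) (Fin m) ℝ} {b b' : Fin N → ℝ}
    {u : Fin m → ℝ} {η : ℝ} (hmargin : ∀ i, η ≤ A.mulVec u i + b i)
    (hclose : matNormInf (A - A') * vecNormInf u + vecNormInf (b - b') ≤ η) (i : Fin N) :
    0 ≤ A'.mulVec u i + b' i := by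
  have hA := (le_abs_self _).trans (abs_mulVec_le (A - A') u i)
  have hb := (le_abs_self _).trans (abs_le_vecNormInf (b - b') i)
  rw [Matrix.sub_mulVec, Pi.sub_apply] at hA
  rw [Pi.sub_apply] at hb
  linarith [hmargin i]

end NormInf

theorem robust_compatibility_margin_general {n nu N : ℕ}
    (D : Set (Fin n → ℝ)) (U : Set (Fin nu → ℝ)) (M : ℝ)
    (hU : ∀ u ∈ U, vecNormInf u ≤ M)
    (A : (Fin n → ℝ) → Matrix (Fin N) (Fin nu) ℝ)
    (b : (Fin n → ℝ) → (Fin N → ℝ))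
    (LA Lb : ℝ)
    (hA : ∀ x ∈ D, ∀ x' ∈ D, matNormInf (A x - A x') ≤ LA * vecNormInf (x - x'))
    (hb : ∀ x ∈ D, ∀ x' ∈ D, vecNormInf (b x - b x') ≤ Lb * vecNormInf (x - x'))
    (η : ℝ)
    (hpos : 0 < LA * M + Lb)
    (hrobust : ∀ x ∈ D, ∃ u ∈ U, ∀ i, η ≤ (A x).mulVec u i + b x i) :
    ∀ x ∈ D, ∀ x' ∈ D, vecNormInf (x - x') ≤ (2 * η / (LA * M + Lb)) / 2 →
      ∃ u ∈ U, ∀ i, 0 ≤ (A x').mulVec u i + b x' i := by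
  intro x hx x' hx' hdist
  obtain ⟨u, hu, hmargin⟩ := hrobust x hx
  refine ⟨u, hu, mulVec_add_nonneg_of_margin hmargin ?_⟩
  set δ := vecNormInf (x - x')
  have hδ : (LA * M + Lb) * δ ≤ η := by
    rw [show 2 * η / (LA * M + Lb) / 2 = η / (LA * M + Lb) by ring] at hdist
    exact (le_div_iff₀' hpos).mp hdist
  have hAu : matNormInf (A x - A x') * vecNormInf u ≤ LA * δ * M :=
    mul_le_mul (hA x hx x' hx') (hU u hu) (vecNormInf_nonneg u)
      ((matNormInf_nonneg _).trans (hA x hx x' hx'))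
  linarith [hb x hx x' hx']

/-- robust compatibility with level `η` on `D` implies compatibility at every
point within `ℓ∞` distance `ρ̲/2 = η/(L_A M + L_b)` of a point of `D`. -/
theorem robust_compatibility_margin {n nu N : ℕ}
    (D : Set (Fin n → ℝ)) (U : Set (Fin nu → ℝ)) (M : ℝ)
    (hU : ∀ u ∈ U, vecNormInf u ≤ M)
    (A : (Fin n → ℝ) → Matrix (Fin N) (Fin nu) ℝ)
    (b : (Fin n → ℝ) → (Fin N → ℝ))
    (LA Lb : ℝ)
    (hA : ∀ x ∈ D, ∀ x' ∈ D, matNormInf (A x - A x') ≤ LA * vecNormInf (x - x'))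
    (hb : ∀ x ∈ D, ∀ x' ∈ D, vecNormInf (b x - b x') ≤ Lb * vecNormInf (x - x'))
    (η : ℝ) (hη : 0 < η)
    (hpos : 0 < LA * M + Lb)
    (hrobust : ∀ x ∈ D, ∃ u ∈ U, ∀ i, η ≤ (A x).mulVec u i + b x i) :
    ∀ x ∈ D, ∀ x' ∈ D, vecNormInf (x - x') ≤ (2 * η / (LA * M + Lb)) / 2 →
      ∃ u ∈ U, ∀ i, 0 ≤ (A x').mulVec u i + b x' i :=
  robust_compatibility_margin_general D U M hU A b LA Lb hA hb η hpos hrobust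
end
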